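/- arXiv:1308.2507 — 2 statements merged into one kernel-verified Lean document; each statement's English description precedes it below -/
import Mathlib

section
/- Let Σ be a separation algebra whose operation * is cancellative on footprints, and let S and S' be histories such that S' is obtained from S by deleting some call actions (S is identical to S' except for extra calls). If S is balanced from a footprint l1 and S' is balanced from a footprint l2 with l2 ⪯ l1, then: the ∘-combination l_c of the footprints δ(σ) of the states σ transferred at the deleted (extra) call actions of S is defined; S' is balanced from l1; ⟦S⟧♯ l1 = (⟦S'⟧♯ l1) ∘ l_c; and ⟦S'⟧♯ l2 ⪯ ⟦S'⟧♯ l1. -/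
/-- A separation algebra: a set with a partial commutative, associative,
cancellative operation `op` (partiality modelled via `Option`) and a unit. -/
structure SepAlg (α : Type*) where
  op : α → α → Option α
  unit : α
  comm : ∀ a b, op a b = op b a
  assoc : ∀ a b c, (op a b).bind (fun x => op x c) = (op b c).bind (fun y => op a y)
  unit_op : ∀ a, op unit a = some a
  cancel : ∀ a b c d, op a b = some d → op a c = some d → b = c

/-- The footprint of a state `σ`. -/
def foot {α : Type*} (SA : SepAlg α) (σ : α) : Set α :=
  {σ' | ∀ σ'', (SA.op σ' σ'').isSome ↔ (SA.op σ σ'').isSome}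

/-- The `*` operation is cancellative on footprints. -/
def CancOnFoot {α : Type*} (SA : SepAlg α) : Prop :=
  ∀ σ1 σ2 σ1' σ2' σ σ', SA.op σ1 σ2 = some σ → SA.op σ1' σ2' = some σ' →
    foot SA σ = foot SA σ' → foot SA σ1 = foot SA σ1' → foot SA σ2 = foot SA σ2'

/-- `FpAdd SA l1 l2 l` means footprint addition `l1 ∘ l2` is defined with value `l`. -/
def FpAdd {α : Type*} (SA : SepAlg α) (l1 l2 l : Set α) : Prop :=
  ∃ σ1 σ2 σ, foot SA σ1 = l1 ∧ foot SA σ2 = l2 ∧ SA.op σ1 σ2 = some σ ∧ foot SA σ = l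

/-- `FpSub SA l1 l2 l` means footprint subtraction `l2 \\ l1` is defined with value `l`. -/
def FpSub {α : Type*} (SA : SepAlg α) (l1 l2 l : Set α) : Prop :=
  ∃ σ1 σ2 σ, foot SA σ1 = l1 ∧ foot SA σ2 = l2 ∧ SA.op σ1 σ = some σ2 ∧ foot SA σ = l

/-- Interface actions: calls and returns with a transferred state. -/
inductive Act (Tid Mtd α : Type*) where
  | call : Tid → Mtd → α → Act Tid Mtd α
  | ret : Tid → Mtd → α → Act Tid Mtd α

namespace Act

def thread {Tid Mtd α : Type*} : Act Tid Mtd α → Tid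
  | .call t _ _ => t
  | .ret t _ _ => t

def isCall {Tid Mtd α : Type*} : Act Tid Mtd α → Prop
  | .call _ _ _ => True
  | .ret _ _ _ => False

def isRet {Tid Mtd α : Type*} : Act Tid Mtd α → Prop
  | .call _ _ _ => False
  | .ret _ _ _ => True

end Act

/-- `altFrom pending l` : the list `l` alternates call and return actions over
matching methods; `pending = none` means a call is expected next, `pending = some m`
means a return from method `m` is expected next. -/
def altFrom {Tid Mtd α : Type*} : Option Mtd → List (Act Tid Mtd α) → Prop
  | _, [] => True
  | none, (Act.call _ m _) :: rest => altFrom (some m) rest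
  | none, (Act.ret _ _ _) :: _ => False
  | some m, (Act.ret _ m' _) :: rest => m' = m ∧ altFrom none rest
  | some _, (Act.call _ _ _) :: _ => False

/-- A history: for every thread, its projection is an alternating sequence of
call and return actions over matching methods, starting with a call. -/
def IsHistory {Tid Mtd α : Type*} [DecidableEq Tid] (H : List (Act Tid Mtd α)) : Prop :=
  ∀ t : Tid, altFrom none (H.filter (fun a => decide (a.thread = t)))

/-- `HEval SA l H l'` holds iff `⟦H⟧♯ l` is defined and equals `l'`. -/
def HEval {Tid Mtd α : Type*} (SA : SepAlg α) :
    Set α → List (Act Tid Mtd α) → Set α → Prop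
  | l, [], l' => l = l'
  | l, (Act.call _ _ σ) :: rest, l' => ∃ lm, FpAdd SA l (foot SA σ) lm ∧ HEval SA lm rest l'
  | l, (Act.ret _ _ σ) :: rest, l' => ∃ lm, FpSub SA (foot SA σ) l lm ∧ HEval SA lm rest l'

/-- `DelCalls H H' ds` : `H'` is obtained from `H` by deleting some call
actions, and `ds` is the list of states transferred at the deleted calls. -/
inductive DelCalls {Tid Mtd α : Type*} :
    List (Act Tid Mtd α) → List (Act Tid Mtd α) → List α → Prop
  | nil : DelCalls [] [] []
  | keep (a : Act Tid Mtd α) {H H' : List (Act Tid Mtd α)} {ds : List α} :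
      DelCalls H H' ds → DelCalls (a :: H) (a :: H') ds
  | drop (t : Tid) (m : Mtd) (σ : α) {H H' : List (Act Tid Mtd α)} {ds : List α} :
      DelCalls H H' ds → DelCalls (Act.call t m σ :: H) H' (σ :: ds)

/-- `FpCombine SA ds l` : `l` is the `∘`-combination of the footprints of the
states in `ds` (the empty combination being `δ(e)`). -/
def FpCombine {α : Type*} (SA : SepAlg α) : List α → Set α → Prop
  | [], l => l = foot SA SA.unit
  | σ :: rest, l => ∃ l', FpCombine SA rest l' ∧ FpAdd SA l' (foot SA σ) l

/-!
Footprints under `∘` form a partial commutative monoid, cancellative by `CancOnFoot`. Replay `H`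
from `k` and `H'` from `l₁` and from `l₂` in lockstep, keeping `k = l₁ ∘ c` and `l₁ = l₂ ∘ d`,
where `c` combines the calls deleted so far and `d = l₁ \ l₂` never changes. A kept call is
defined on `l₁` because it is defined on `k = l₁ ∘ c`; a return is defined on `l₁` because it is
defined on `l₂`, and cancellation identifies the result with the one reached from `k`.
-/

section FootprintCalculus

variable {α : Type*} {SA : SepAlg α}

theorem foot_eq_foot_iff {σ σ' : α} :
    foot SA σ = foot SA σ' ↔ ∀ τ, (SA.op σ τ).isSome ↔ (SA.op σ' τ).isSome := by
  refine ⟨fun h => ?_, fun h => ?_⟩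
  · have hmem : σ ∈ foot SA σ' := h ▸ fun _ => Iff.rfl
    exact hmem
  · ext x
    exact ⟨fun hx τ => (hx τ).trans (h τ), fun hx τ => (hx τ).trans (h τ).symm⟩

theorem SepAlg.op_eq_bind_of_op_eq_some {a b t : α} (hab : SA.op a b = some t) (c : α) :
    SA.op t c = (SA.op b c).bind (SA.op a) := by
  simpa [hab] using SA.assoc a b c

theorem SepAlg.op_unit_right (σ : α) : SA.op σ SA.unit = some σ :=
  (SA.comm σ SA.unit).trans (SA.unit_op σ)

theorem foot_op_congr_left {σ1 σ1' σ2 τ τ' : α} (h : foot SA σ1 = foot SA σ1')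
    (hτ : SA.op σ1 σ2 = some τ) (hτ' : SA.op σ1' σ2 = some τ') :
    foot SA τ = foot SA τ' := by
  refine foot_eq_foot_iff.mpr fun u => ?_
  rw [SA.op_eq_bind_of_op_eq_some hτ, SA.op_eq_bind_of_op_eq_some hτ']
  cases SA.op σ2 u with
  | none => simp
  | some v => simpa using foot_eq_foot_iff.mp h v

theorem foot_op_congr {σ1 σ1' σ2 σ2' τ τ' : α} (h1 : foot SA σ1 = foot SA σ1')
    (h2 : foot SA σ2 = foot SA σ2') (hτ : SA.op σ1 σ2 = some τ)
    (hτ' : SA.op σ1' σ2' = some τ') : foot SA τ = foot SA τ' := by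
  obtain ⟨ρ, hρ⟩ : ∃ ρ, SA.op σ1' σ2 = some ρ :=
    Option.isSome_iff_exists.mp ((foot_eq_foot_iff.mp h1 σ2).mp (by simp [hτ]))
  exact (foot_op_congr_left h1 hτ hρ).trans
    (foot_op_congr_left h2 ((SA.comm σ2 σ1').trans hρ) ((SA.comm σ2' σ1').trans hτ'))

namespace FpAdd

theorem unique {a b x x' : Set α} (h : FpAdd SA a b x) (h' : FpAdd SA a b x') : x = x' := by
  obtain ⟨σa, σb, τ, rfl, rfl, hτ, rfl⟩ := h
  obtain ⟨σa', σb', τ', ha, hb, hτ', rfl⟩ := h'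
  exact foot_op_congr ha.symm hb.symm hτ hτ'

theorem symm {a b x : Set α} (h : FpAdd SA a b x) : FpAdd SA b a x := by
  obtain ⟨σa, σb, τ, ha, hb, hτ, hx⟩ := h
  exact ⟨σb, σa, τ, hb, ha, (SA.comm σb σa).trans hτ, hx⟩

theorem assoc {a b c x y : Set α} (hx : FpAdd SA a b x) (hy : FpAdd SA x c y) :
    ∃ z, FpAdd SA b c z ∧ FpAdd SA a z y := by
  obtain ⟨σa, σb, τ, rfl, rfl, hτ, rfl⟩ := hx
  obtain ⟨τ', σc, ρ', hτ', rfl, hρ', rfl⟩ := hy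
  obtain ⟨ρ, hρ⟩ : ∃ ρ, SA.op τ σc = some ρ :=
    Option.isSome_iff_exists.mp ((foot_eq_foot_iff.mp hτ' σc).mp (by simp [hρ']))
  have hbind := SA.op_eq_bind_of_op_eq_some hτ σc
  rw [hρ] at hbind
  cases hbc : SA.op σb σc with
  | none => simp [hbc] at hbind
  | some u =>
    rw [hbc] at hbind
    exact ⟨foot SA u, ⟨σb, σc, u, rfl, rfl, hbc, rfl⟩,
      ⟨σa, u, ρ, rfl, rfl, hbind.symm, foot_op_congr_left hτ'.symm hρ hρ'⟩⟩

theorem right_comm {a b c x y : Set α} (hx : FpAdd SA a b x) (hy : FpAdd SA x c y) :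
    ∃ z, FpAdd SA a c z ∧ FpAdd SA z b y := by
  obtain ⟨z, hac, hbz⟩ := hx.symm.assoc hy
  exact ⟨z, hac, hbz.symm⟩

theorem cancel_left (hc : CancOnFoot SA) {a b b' x : Set α}
    (h : FpAdd SA a b x) (h' : FpAdd SA a b' x) : b = b' := by
  obtain ⟨σa, σb, τ, rfl, rfl, hτ, rfl⟩ := h
  obtain ⟨σa', σb', τ', ha, rfl, hτ', hx⟩ := h'
  exact hc σa σb σa' σb' τ τ' hτ hτ' hx.symm ha.symm

theorem unit_right_of_sum {a b x : Set α} (h : FpAdd SA a b x) :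
    FpAdd SA x (foot SA SA.unit) x := by
  obtain ⟨-, -, τ, -, -, -, rfl⟩ := h
  exact ⟨τ, SA.unit, τ, rfl, rfl, SA.op_unit_right τ, rfl⟩

theorem unit_right_of_summand {a b x : Set α} (h : FpAdd SA a b x) :
    FpAdd SA a (foot SA SA.unit) a := by
  obtain ⟨σa, -, -, rfl, -⟩ := h
  exact ⟨σa, SA.unit, σa, rfl, rfl, SA.op_unit_right σa, rfl⟩

theorem eq_of_unit_left {b x : Set α} (h : FpAdd SA (foot SA SA.unit) b x) : x = b := by
  obtain ⟨σe, σb, τ, he, rfl, hτ, rfl⟩ := h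
  exact foot_op_congr_left he hτ (SA.unit_op σb)

end FpAdd

theorem fpSub_iff_fpAdd {a b x : Set α} : FpSub SA a b x ↔ FpAdd SA a x b :=
  ⟨fun ⟨σ1, σ2, σ, h1, h2, he, hx⟩ => ⟨σ1, σ, σ2, h1, hx, he, h2⟩,
    fun ⟨σ1, σ, σ2, h1, hx, he, h2⟩ => ⟨σ1, σ2, σ, h1, h2, he, hx⟩⟩

theorem frame_call_step {k l1 l2 c d s km lm2 : Set α} (hk : FpAdd SA l1 c k)
    (hl1 : FpAdd SA l2 d l1) (hkm : FpAdd SA k s km) (hlm2 : FpAdd SA l2 s lm2) :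
    ∃ lm1, FpAdd SA l1 s lm1 ∧ FpAdd SA lm1 c km ∧ FpAdd SA lm2 d lm1 := by
  obtain ⟨lm1, hlm1, hkm'⟩ := hk.right_comm hkm
  obtain ⟨g, hg, hgd⟩ := hl1.right_comm hlm1
  obtain rfl : g = lm2 := hg.unique hlm2
  exact ⟨lm1, hlm1, hkm', hgd⟩

theorem frame_ret_step (hc : CancOnFoot SA) {k l1 l2 c d s km lm2 : Set α}
    (hk : FpAdd SA l1 c k) (hl1 : FpAdd SA l2 d l1) (hkm : FpAdd SA s km k)
    (hlm2 : FpAdd SA s lm2 l2) :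
    ∃ lm1, FpAdd SA s lm1 l1 ∧ FpAdd SA lm1 c km ∧ FpAdd SA lm2 d lm1 := by
  obtain ⟨lm1, hlm2d, hslm1⟩ := hlm2.assoc hl1
  obtain ⟨g, hlm1c, hsg⟩ := hslm1.assoc hk
  obtain rfl : g = km := FpAdd.cancel_left hc hsg hkm
  exact ⟨lm1, hslm1, hlm1c, hlm2d⟩

theorem DelCalls.heval_frame {Tid Mtd : Type*} (hc : CancOnFoot SA)
    {H H' : List (Act Tid Mtd α)} {ds : List α} (hdel : DelCalls H H' ds)
    {k l1 l2 c d rk r2 : Set α} (hH : HEval SA k H rk) (hH' : HEval SA l2 H' r2)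
    (hk : FpAdd SA l1 c k) (hl1 : FpAdd SA l2 d l1) :
    ∃ lc r1, FpCombine SA ds lc ∧ HEval SA l1 H' r1 ∧
      (∃ c', FpAdd SA c lc c' ∧ FpAdd SA r1 c' rk) ∧ FpAdd SA r2 d r1 := by
  induction hdel generalizing k l1 l2 c with
  | nil =>
    obtain rfl : k = rk := hH
    obtain rfl : l2 = r2 := hH'
    exact ⟨foot SA SA.unit, l1, rfl, rfl, ⟨c, hk.symm.unit_right_of_summand, hk⟩, hl1⟩
  | keep a _ ih =>
    cases a with
    | call t m σ =>
      obtain ⟨km, hkm, hH⟩ := hH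
      obtain ⟨lm2, hlm2, hH'⟩ := hH'
      obtain ⟨lm1, hlm1, hk, hl1⟩ := frame_call_step hk hl1 hkm hlm2
      obtain ⟨lc, r1, hlc, hr1, hrk, hr2⟩ := ih hH hH' hk hl1
      exact ⟨lc, r1, hlc, ⟨lm1, hlm1, hr1⟩, hrk, hr2⟩
    | ret t m σ =>
      obtain ⟨km, hkm, hH⟩ := hH
      obtain ⟨lm2, hlm2, hH'⟩ := hH'
      obtain ⟨lm1, hlm1, hk, hl1⟩ :=
        frame_ret_step hc hk hl1 (fpSub_iff_fpAdd.mp hkm) (fpSub_iff_fpAdd.mp hlm2)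
      obtain ⟨lc, r1, hlc, hr1, hrk, hr2⟩ := ih hH hH' hk hl1
      exact ⟨lc, r1, hlc, ⟨lm1, fpSub_iff_fpAdd.mpr hlm1, hr1⟩, hrk, hr2⟩
  | drop t m σ _ ih =>
    obtain ⟨km, hkm, hH⟩ := hH
    obtain ⟨c', hcσ, hk⟩ := hk.assoc hkm
    obtain ⟨lc, r1, hlc, hr1, ⟨c'', hc'', hrk⟩, hr2⟩ := ih hH hH' hk hl1
    obtain ⟨lσ, hσlc, hclσ⟩ := hcσ.assoc hc''
    exact ⟨lσ, r1, ⟨lc, hlc, hσlc.symm⟩, hr1, ⟨c'', hclσ, hrk⟩, hr2⟩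

end FootprintCalculus

theorem extra_calls_footprint_general {α Tid Mtd : Type*}
    (SA : SepAlg α) (hc : CancOnFoot SA)
    (H H' : List (Act Tid Mtd α)) (ds : List α)
    (hdel : DelCalls H H' ds)
    (l1 l2 r1 r2 : Set α)
    (he1 : HEval SA l1 H r1) (he2 : HEval SA l2 H' r2)
    (hpre : ∃ l, FpSub SA l2 l1 l) :
    ∃ lc r1', FpCombine SA ds lc ∧ HEval SA l1 H' r1' ∧
      FpAdd SA r1' lc r1 ∧ ∃ lx, FpSub SA r2 r1' lx := by
  obtain ⟨d, hd⟩ := hpre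
  have hl1 : FpAdd SA l2 d l1 := fpSub_iff_fpAdd.mp hd
  obtain ⟨lc, r1', hlc, hr1', ⟨c', hc', hr1⟩, hr2⟩ :=
    hdel.heval_frame hc he1 he2 hl1.unit_right_of_sum hl1
  obtain rfl : c' = lc := hc'.eq_of_unit_left
  exact ⟨c', r1', hlc, hr1', hr1, d, fpSub_iff_fpAdd.mpr hr2⟩

/-- let `H` and `H'` be histories where `H'` is `H` with some
call actions deleted (the deleted calls transferring the states `ds`).  If `H`
is balanced from `l1` (with result `r1`) and `H'` is balanced from `l2` (with
result `r2`) where `l2 ⪯ l1`, then: the `∘`-combination `lc` of the footprints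
of the states in `ds` is defined; `H'` is balanced from `l1` (with some result
`r1'`); `⟦H⟧♯ l1 = (⟦H'⟧♯ l1) ∘ lc`, i.e. `r1 = r1' ∘ lc`; and
`⟦H'⟧♯ l2 ⪯ ⟦H'⟧♯ l1`, i.e. `r1' \\ r2` is defined. -/
theorem extra_calls_footprint {α Tid Mtd : Type*} [DecidableEq Tid]
    (SA : SepAlg α) (hc : CancOnFoot SA)
    (H H' : List (Act Tid Mtd α)) (ds : List α)
    (hdel : DelCalls H H' ds)
    (hH : IsHistory H) (hH' : IsHistory H')
    (l1 l2 r1 r2 : Set α)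
    (hfl1 : ∃ σ, foot SA σ = l1) (hfl2 : ∃ σ, foot SA σ = l2)
    (he1 : HEval SA l1 H r1) (he2 : HEval SA l2 H' r2)
    (hpre : ∃ l, FpSub SA l2 l1 l) :
    ∃ lc r1', FpCombine SA ds lc ∧ HEval SA l1 H' r1' ∧
      FpAdd SA r1' lc r1 ∧ ∃ lx, FpSub SA r2 r1' lx :=
  extra_calls_footprint_general SA hc H H' ds hdel l1 l2 r1 r2 he1 he2 hpre
end

section
/- The operation * of the separation algebra RAM_π is cancellative on footprints: for all σ1, σ2, σ1', σ2' ∈ RAM_π such that σ1 * σ2 and σ1' * σ2' are defined, if δ(σ1 * σ2) = δ(σ1' * σ2') and δ(σ1) = δ(σ1'), then δ(σ2) = δ(σ2'). -/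
/-- Permissions: real numbers in `(0, 1]`. -/
def Perm : Type := {p : ℝ // 0 < p ∧ p ≤ 1}

/-- `RAM_π`: finite partial functions from `Loc = {1,2,...}` (modelled as `ℕ+`)
to `Val × Perm`, with `Val = ℤ`. -/
def RAMp : Type := { f : ℕ+ → Option (ℤ × Perm) // {x | f x ≠ none}.Finite }

open Classical in
/-- Pointwise combination of permission-carrying cells: when both sides are
defined they must agree on the value and their permissions must sum to at
most `1`, in which case the permissions are added. -/
noncomputable def pcomb (a b : Option (ℤ × Perm)) : Option (ℤ × Perm) :=
  match a, b with
  | none, b => b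
  | some v, none => some v
  | some (u1, p1), some (u2, p2) =>
    if h : u1 = u2 ∧ p1.1 + p2.1 ≤ 1 then
      some (u1, ⟨p1.1 + p2.1, ⟨add_pos p1.2.1 p2.2.1, h.2⟩⟩)
    else none

/-- Compatibility `σ1 ♯ σ2` of two states of `RAM_π`. -/
def rampCompat (σ1 σ2 : RAMp) : Prop :=
  ∀ x u1 p1 u2 p2, σ1.1 x = some (u1, p1) → σ2.1 x = some (u2, p2) →
    u1 = u2 ∧ p1.1 + p2.1 ≤ 1

lemma pcomb_finite (σ1 σ2 : RAMp) : {x | pcomb (σ1.1 x) (σ2.1 x) ≠ none}.Finite := by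
  apply Set.Finite.subset (σ1.2.union σ2.2)
  intro x hx
  simp only [Set.mem_setOf_eq, Set.mem_union] at hx ⊢
  by_cases h1 : σ1.1 x = none
  · right
    intro h2
    apply hx
    rw [h1, h2]
    rfl
  · left; exact h1

open Classical in
/-- The `*` operation of `RAM_π`: permission-combining union, undefined when
the two states are incompatible. -/
noncomputable def rampOp (σ1 σ2 : RAMp) : Option RAMp :=
  if rampCompat σ1 σ2 then
    some ⟨fun x => pcomb (σ1.1 x) (σ2.1 x), pcomb_finite σ1 σ2⟩
  else none

/-- The empty state `[]` of `RAM_π`. -/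
def rampEmpty : RAMp := ⟨fun _ => none, by simp⟩

/-- The footprint of a state of `RAM_π`. -/
def footRamp (σ : RAMp) : Set RAMp :=
  {σ' | ∀ σ'', (rampOp σ' σ'').isSome ↔ (rampOp σ σ'').isSome}

/-!
Footprints are local: `δ(σ) = δ(τ)` iff at every location the cells `σ x` and `τ x` are
compatible with the same cells (test with one-location states), and two cells have this
property iff they are equal or both carry full permission. Cancellation is then a cellwise
case analysis. If `σ₁ x` is full, both `σ₂ x` and `σ₂' x` are empty. Otherwise
`σ₁ x = σ₁' x`, and either the combined cells are equal, so `σ₂ x = σ₂' x` by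
cancellativity of addition of permissions, or both are full, so `σ₂ x` and `σ₂' x` are both
the complement of `σ₁ x` to full permission.
-/

abbrev Cell : Type := Option (ℤ × Perm)

def cellCompat (a b : Cell) : Prop :=
  ∀ u1 p1 u2 p2, a = some (u1, p1) → b = some (u2, p2) → u1 = u2 ∧ p1.1 + p2.1 ≤ 1

@[simp] lemma cellCompat_none_left (b : Cell) : cellCompat none b := by
  rintro _ _ _ _ ⟨⟩

@[simp] lemma cellCompat_none_right (a : Cell) : cellCompat a none := by
  rintro _ _ _ _ _ ⟨⟩

@[simp] lemma cellCompat_some_some {u v : ℤ} {p q : Perm} :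
    cellCompat (some (u, p)) (some (v, q)) ↔ u = v ∧ p.1 + q.1 ≤ 1 :=
  ⟨fun h => h u p v q rfl rfl, by rintro h _ _ _ _ ⟨⟩ ⟨⟩; exact h⟩

@[simp] lemma pcomb_some_none (v : ℤ × Perm) : pcomb (some v) none = some v := rfl

lemma pcomb_some_some {u v : ℤ} {p q : Perm} (h : cellCompat (some (u, p)) (some (v, q))) :
    pcomb (some (u, p)) (some (v, q)) =
      some (u, ⟨p.1 + q.1, add_pos p.2.1 q.2.1, (cellCompat_some_some.1 h).2⟩) := by
  simp [pcomb, cellCompat_some_some.1 h]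

def IsFull : Cell → Prop
  | none => False
  | some (_, p) => p.1 = 1

@[simp] lemma isFull_some {u : ℤ} {p : Perm} : IsFull (some (u, p)) ↔ p.1 = 1 := Iff.rfl

lemma eq_none_of_isFull_of_cellCompat {a b : Cell} (ha : IsFull a) (h : cellCompat a b) :
    b = none := by
  rcases a with _ | ⟨u, p⟩
  · exact ha.elim
  rcases b with _ | ⟨v, q⟩
  · rfl
  · linarith [(cellCompat_some_some.1 h).2, q.2.1, isFull_some.1 ha]

def cellFoot (a : Cell) : Set Cell := {c | cellCompat a c}

@[simp] lemma mem_cellFoot {a c : Cell} : c ∈ cellFoot a ↔ cellCompat a c := Iff.rfl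

@[simp] lemma cellFoot_none : cellFoot none = Set.univ :=
  Set.eq_univ_of_forall cellCompat_none_left

lemma cellFoot_some_ne_univ (u : ℤ) (p : Perm) : cellFoot (some (u, p)) ≠ Set.univ := by
  intro h
  have : some (u + 1, p) ∈ cellFoot (some (u, p)) := h ▸ Set.mem_univ _
  exact absurd (cellCompat_some_some.1 this).1 (by omega)

lemma cellFoot_of_isFull {a : Cell} (ha : IsFull a) : cellFoot a = {none} :=
  Set.ext fun _ => ⟨eq_none_of_isFull_of_cellCompat ha, fun h => h ▸ cellCompat_none_right a⟩

/-- A non-full cell `(u, p)` is tested by its complement `(u, 1 - p)`. -/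
lemma cellFoot_some_subset {u v : ℤ} {p q : Perm} (hp : p.1 < 1)
    (h : cellFoot (some (u, p)) ⊆ cellFoot (some (v, q))) : v = u ∧ q.1 ≤ p.1 := by
  have hc : some (u, (⟨1 - p.1, by linarith, by linarith [p.2.1]⟩ : Perm)) ∈
      cellFoot (some (u, p)) :=
    cellCompat_some_some.2 ⟨rfl, (add_sub_cancel p.1 1).le⟩
  obtain ⟨hvu, hle⟩ := cellCompat_some_some.1 (h hc)
  have hle : q.1 + (1 - p.1) ≤ 1 := hle
  exact ⟨hvu, by linarith⟩

lemma cellFoot_eq_iff {a b : Cell} :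
    cellFoot a = cellFoot b ↔ a = b ∨ IsFull a ∧ IsFull b := by
  refine ⟨fun h => ?_, ?_⟩
  · rcases a with _ | ⟨u, p⟩ <;> rcases b with _ | ⟨v, q⟩
    · exact .inl rfl
    · exact absurd (h.symm.trans cellFoot_none) (cellFoot_some_ne_univ v q)
    · exact absurd (h.trans cellFoot_none) (cellFoot_some_ne_univ u p)
    · by_cases hp : p.1 < 1
      · obtain ⟨rfl, hqp⟩ := cellFoot_some_subset hp h.le
        obtain ⟨-, hpq⟩ := cellFoot_some_subset (hqp.trans_lt hp) h.ge
        exact .inl (by rw [Subtype.ext (le_antisymm hpq hqp)])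
      by_cases hq : q.1 < 1
      · exact absurd ((cellFoot_some_subset hq h.ge).2.trans_lt hq) hp
      · exact .inr ⟨le_antisymm p.2.2 (not_lt.1 hp), le_antisymm q.2.2 (not_lt.1 hq)⟩
  · rintro (rfl | ⟨ha, hb⟩)
    · rfl
    · rw [cellFoot_of_isFull ha, cellFoot_of_isFull hb]

lemma pcomb_left_cancel {a b b' : Cell} (h : cellCompat a b) (h' : cellCompat a b')
    (he : pcomb a b = pcomb a b') : b = b' := by
  rcases a with _ | ⟨u, p⟩
  · exact he
  rcases b with _ | ⟨v, q⟩ <;> rcases b' with _ | ⟨v', q'⟩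
  · rfl
  · rw [pcomb_some_none, pcomb_some_some h'] at he
    have : p.1 = p.1 + q'.1 := congrArg (fun c => c.2.1) (Option.some.inj he)
    linarith [q'.2.1]
  · rw [pcomb_some_none, pcomb_some_some h] at he
    have : p.1 + q.1 = p.1 := congrArg (fun c => c.2.1) (Option.some.inj he)
    linarith [q.2.1]
  · obtain ⟨rfl, -⟩ := cellCompat_some_some.1 h
    obtain ⟨rfl, -⟩ := cellCompat_some_some.1 h'
    rw [pcomb_some_some h, pcomb_some_some h'] at he
    have : p.1 + q.1 = p.1 + q'.1 := congrArg (fun c => c.2.1) (Option.some.inj he)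
    rw [Subtype.ext (add_left_cancel this)]

lemma cellFoot_eq_of_isFull_pcomb {a b b' : Cell} (h : cellCompat a b) (h' : cellCompat a b')
    (hf : IsFull (pcomb a b)) (hf' : IsFull (pcomb a b')) : cellFoot b = cellFoot b' := by
  rcases a with _ | ⟨u, p⟩
  · exact cellFoot_eq_iff.2 (.inr ⟨hf, hf'⟩)
  congr 1
  rcases b with _ | ⟨v, q⟩ <;> rcases b' with _ | ⟨v', q'⟩
  · rfl
  · rw [pcomb_some_none] at hf
    linarith [(cellCompat_some_some.1 h').2, q'.2.1, (isFull_some.1 hf)]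
  · rw [pcomb_some_none] at hf'
    linarith [(cellCompat_some_some.1 h).2, q.2.1, (isFull_some.1 hf')]
  · obtain ⟨rfl, -⟩ := cellCompat_some_some.1 h
    obtain ⟨rfl, -⟩ := cellCompat_some_some.1 h'
    rw [pcomb_some_some h] at hf
    rw [pcomb_some_some h'] at hf'
    have hf : p.1 + q.1 = 1 := hf
    have hf' : p.1 + q'.1 = 1 := hf'
    rw [Subtype.ext (add_left_cancel (hf.trans hf'.symm))]

lemma cellFoot_cancel {a₁ a₂ a₁' a₂' : Cell}
    (h : cellCompat a₁ a₂) (h' : cellCompat a₁' a₂')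
    (hf : cellFoot (pcomb a₁ a₂) = cellFoot (pcomb a₁' a₂'))
    (hf₁ : cellFoot a₁ = cellFoot a₁') : cellFoot a₂ = cellFoot a₂' := by
  rw [cellFoot_eq_iff] at hf hf₁
  rcases hf₁ with rfl | ⟨ha₁, ha₁'⟩
  · rcases hf with he | ⟨hf, hf'⟩
    · rw [pcomb_left_cancel h h' he]
    · exact cellFoot_eq_of_isFull_pcomb h h' hf hf'
  · rw [eq_none_of_isFull_of_cellCompat ha₁ h, eq_none_of_isFull_of_cellCompat ha₁' h']

lemma isSome_rampOp (σ τ : RAMp) : (rampOp σ τ).isSome ↔ rampCompat σ τ := by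
  unfold rampOp; split_ifs with h <;> simp [h]; rfl

lemma footRamp_eq_iff {σ τ : RAMp} :
    footRamp σ = footRamp τ ↔ ∀ ρ, rampCompat σ ρ ↔ rampCompat τ ρ := by
  refine ⟨fun h ρ => ?_, fun h => ?_⟩
  · have hσ : σ ∈ footRamp τ := h ▸ fun _ => Iff.rfl
    simpa only [isSome_rampOp] using hσ ρ
  · ext ρ
    simp only [footRamp, Set.mem_ofPred_eq, isSome_rampOp, h]

lemma rampCompat_iff_forall_cellCompat {σ τ : RAMp} :
    rampCompat σ τ ↔ ∀ x, cellCompat (σ.1 x) (τ.1 x) := Iff.rfl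

def rampSingle (x : ℕ+) (c : Cell) : RAMp :=
  ⟨fun y => if y = x then c else none,
    (Set.finite_singleton x).subset fun y hy => by by_contra hyx; simp_all⟩

lemma rampCompat_rampSingle (σ : RAMp) (x : ℕ+) (c : Cell) :
    rampCompat σ (rampSingle x c) ↔ cellCompat (σ.1 x) c := by
  rw [rampCompat_iff_forall_cellCompat]
  refine ⟨fun h => ?_, fun h y => ?_⟩
  · simpa [rampSingle] using h x
  · by_cases hyx : y = x
    · subst hyx; simpa [rampSingle] using h
    · simp [rampSingle, hyx]

lemma footRamp_eq_iff_forall_cellFoot_eq {σ τ : RAMp} :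
    footRamp σ = footRamp τ ↔ ∀ x, cellFoot (σ.1 x) = cellFoot (τ.1 x) := by
  rw [footRamp_eq_iff]
  refine ⟨fun h x => Set.ext fun c => ?_, fun h ρ => forall_congr' fun x => ?_⟩
  · simpa only [mem_cellFoot, rampCompat_rampSingle] using h (rampSingle x c)
  · exact Set.ext_iff.1 (h x) (ρ.1 x)

lemma rampOp_eq_some {σ₁ σ₂ s : RAMp} (h : rampOp σ₁ σ₂ = some s) :
    rampCompat σ₁ σ₂ ∧ ∀ x, s.1 x = pcomb (σ₁.1 x) (σ₂.1 x) := by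
  unfold rampOp at h
  split_ifs at h with hc
  cases h
  exact ⟨hc, fun _ => rfl⟩

/-- the `*` operation of `RAM_π` is cancellative on footprints. -/
theorem ramp_cancOnFoot (σ1 σ2 σ1' σ2' s s' : RAMp)
    (h : rampOp σ1 σ2 = some s) (h' : rampOp σ1' σ2' = some s')
    (hf : footRamp s = footRamp s') (hf1 : footRamp σ1 = footRamp σ1') :
    footRamp σ2 = footRamp σ2' := by
  obtain ⟨hc, hs⟩ := rampOp_eq_some h
  obtain ⟨hc', hs'⟩ := rampOp_eq_some h'
  rw [footRamp_eq_iff_forall_cellFoot_eq] at hf hf1 ⊢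
  intro x
  exact cellFoot_cancel (hc x) (hc' x) (by rw [← hs, ← hs']; exact hf x) (hf1 x)
end
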